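/- Let D be a division ring with center K and let B be an ultramatricial K-algebra, and set A = D tensor_K B. Then the restriction map S |-> S restricted to 1 tensor B is an affine bijection from the set P(A) of pseudo-rank functions on A onto the set P(B) of pseudo-rank functions on B (indeed a homeomorphism for the topologies of pointwise convergence). -/

import Mathlib

open scoped TensorProduct Kronecker

noncomputable section

namespace AraClaramunt

/-! ### Pseudo-rank functions and rank metric notions -/

/-- A pseudo-rank function on a unital ring. -/
structure IsPseudoRankFunction {R : Type*} [Ring R] (N : R → ℝ) : Prop where
  nonneg : ∀ x : R, 0 ≤ N x
  le_one : ∀ x : R, N x ≤ 1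
  map_one : N 1 = 1
  subadditive : ∀ a b : R, N (a + b) ≤ N a + N b
  mul_le_left : ∀ a b : R, N (a * b) ≤ N a
  mul_le_right : ∀ a b : R, N (a * b) ≤ N b
  add_of_orthogonal : ∀ e f : R, IsIdempotentElem e → IsIdempotentElem f →
    e * f = 0 → f * e = 0 → N (e + f) = N e + N f

/-- A rank function is a faithful pseudo-rank function. -/
def IsRankFunction {R : Type*} [Ring R] (N : R → ℝ) : Prop :=
  IsPseudoRankFunction N ∧ ∀ x : R, N x = 0 → x = 0

/-- Cauchy sequence for the pseudo-metric `d(x,y) = N (x - y)`. -/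
def RankCauchy {R : Type*} [Ring R] (N : R → ℝ) (u : ℕ → R) : Prop :=
  ∀ ε : ℝ, 0 < ε → ∃ n₀ : ℕ, ∀ m n : ℕ, n₀ ≤ m → n₀ ≤ n → N (u m - u n) < ε

/-- Convergence for the pseudo-metric `d(x,y) = N (x - y)`. -/
def RankTendsto {R : Type*} [Ring R] (N : R → ℝ) (u : ℕ → R) (x : R) : Prop :=
  ∀ ε : ℝ, 0 < ε → ∃ n₀ : ℕ, ∀ n : ℕ, n₀ ≤ n → N (u n - x) < ε

/-- Completeness with respect to the pseudo-metric `d(x,y) = N (x - y)`. -/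
def RankComplete {R : Type*} [Ring R] (N : R → ℝ) : Prop :=
  ∀ u : ℕ → R, RankCauchy N u → ∃ x : R, RankTendsto N u x

/-- Density of a subset with respect to the pseudo-metric `d(x,y) = N (x - y)`. -/
def RankDense {R : Type*} [Ring R] (N : R → ℝ) (S : Set R) : Prop :=
  ∀ x : R, ∀ ε : ℝ, 0 < ε → ∃ y ∈ S, N (x - y) < ε

/-- von Neumann regularity. -/
def VNRegular (R : Type*) [Ring R] : Prop :=
  ∀ x : R, ∃ y : R, x = x * y * x

/-- A continuous factor: a simple, von Neumann regular, right and left self-injective ring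
admitting a rank function whose image is all of `[0,1]`. -/
def IsContinuousFactor (R : Type*) [Ring R] : Prop :=
  IsSimpleRing R ∧ VNRegular R ∧ Module.Injective R R ∧ Module.Injective Rᵐᵒᵖ Rᵐᵒᵖ ∧
    ∃ N : R → ℝ, IsRankFunction N ∧ Set.range N = Set.Icc (0 : ℝ) 1

/-- An extremal pseudo-rank function: an extreme point of the convex set of all
pseudo-rank functions. -/
def IsExtremalPseudoRankFunction {R : Type*} [Ring R] (N : R → ℝ) : Prop :=
  N ∈ Set.extremePoints ℝ {S : R → ℝ | IsPseudoRankFunction S}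

/-! ### Matricial and ultramatricial algebras -/

/-- A matricial `K`-algebra. -/
def IsMatricialAlgebra (K : Type*) [Field K] (A : Type*) [Ring A] [Algebra K A] : Prop :=
  ∃ (k : ℕ) (n : Fin (k + 1) → ℕ), (∀ i, 0 < n i) ∧
    Nonempty (A ≃ₐ[K] ((i : Fin (k + 1)) → Matrix (Fin (n i)) (Fin (n i)) K))

/-- An ultramatricial `K`-algebra: the increasing union of matricial subalgebras. -/
def IsUltramatricialAlgebra (K : Type*) [Field K] (B : Type*) [Ring B] [Algebra K B] : Prop :=
  ∃ C : ℕ → Subalgebra K B, (∀ n, C n ≤ C (n + 1)) ∧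
    (∀ n, IsMatricialAlgebra K (C n)) ∧ (∀ b : B, ∃ n, b ∈ C n)

/-- `Q`, with rank function `N`, is the rank-metric completion of a direct limit of the matrix
algebras `M_{p n}(K)`: it is complete and carries a dense increasing tower of unital subalgebras
isomorphic to `M_{p n}(K)`. -/
def IsMatrixTowerCompletion (K : Type*) [Field K] (Q : Type*) [Ring Q] [Algebra K Q]
    (N : Q → ℝ) (p : ℕ → ℕ) : Prop :=
  IsRankFunction N ∧ RankComplete N ∧
    ∃ A : ℕ → Subalgebra K Q, (∀ n, A n ≤ A (n + 1)) ∧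
      (∀ n, Nonempty ((A n) ≃ₐ[K] Matrix (Fin (p n)) (Fin (p n)) K)) ∧
      RankDense N (⋃ n, (A n : Set Q))

/-- `Q` is (a copy of) von Neumann's continuous factor `M_K`, the completion of
`lim_n M_{2^n}(K)` with respect to its unique rank function. -/
def IsMK (K : Type*) [Field K] (Q : Type*) [Ring Q] [Algebra K Q] (N : Q → ℝ) : Prop :=
  IsMatrixTowerCompletion K Q N (fun n => 2 ^ n)

/-- The canonical block-diagonal unital embedding `M_a(K) → M_b(K)`, `z ↦ z ⊗ 1_g`,
where `b = a * g`. -/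
def blockEmbedFun (K : Type*) [Semiring K] {a : ℕ} (g b : ℕ) (h : a * g = b)
    (z : Matrix (Fin a) (Fin a) K) : Matrix (Fin b) (Fin b) K :=
  Matrix.reindex (finProdFinEquiv.trans (finCongr h)) (finProdFinEquiv.trans (finCongr h))
    (z ⊗ₖ (1 : Matrix (Fin g) (Fin g) K))

end AraClaramunt

namespace AraClaramunt

/-!
Write `B` as the increasing union of matricial subalgebras `C n ≅ Π i, M_{p i}(K)`. Since `D` is
flat over the field `K`, `D ⊗ B` is the increasing union of the subalgebras
`D ⊗ C n ≅ Π i, M_{p i}(D)`.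

Over a division ring `E`, a matrix `M ∈ M_p(E)` of rank `r` and a sum of `r` distinct diagonal
matrix units divide each other on both sides, and all diagonal matrix units of one block take the
same value under a pseudo-rank function `P`. Hence `P M = ∑ i, rank (M i) * P (e^i_{00})` on
`Π i, M_{p i}(E)`, and conversely every such formula whose weights satisfy `∑ i, p i * w i = 1`
is a pseudo-rank function.

So a pseudo-rank function on `D ⊗ C n` is determined by its values on `1 ⊗ C n`, and every
pseudo-rank function on `C n` extends to `D ⊗ C n` (take the weights `w i = N (e^i_{00})`).
By uniqueness these extensions are compatible along the tower and glue to `D ⊗ B`. The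
restriction map is therefore a continuous bijection from a compact space onto a Hausdorff one,
hence a homeomorphism; it is affine since it is a restriction.
-/

namespace IsPseudoRankFunction

variable {R : Type*} [Ring R] {N : R → ℝ}

theorem comp {R' : Type*} [Ring R'] {F : Type*} [FunLike F R' R] [RingHomClass F R' R]
    (h : IsPseudoRankFunction N) (f : F) : IsPseudoRankFunction (N ∘ f) where
  nonneg _ := h.nonneg _
  le_one _ := h.le_one _
  map_one := by simp [h.map_one]
  subadditive a b := by simpa using h.subadditive (f a) (f b)
  mul_le_left a b := by simpa using h.mul_le_left (f a) (f b)
  mul_le_right a b := by simpa using h.mul_le_right (f a) (f b)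
  add_of_orthogonal e e' he he' hee' he'e := by
    simpa using h.add_of_orthogonal _ _ (he.map f) (he'.map f)
      (by rw [← map_mul, hee', map_zero]) (by rw [← map_mul, he'e, map_zero])

theorem map_zero (h : IsPseudoRankFunction N) : N 0 = 0 := by
  have := h.add_of_orthogonal 0 0 .zero .zero (mul_zero 0) (mul_zero 0)
  rw [add_zero] at this
  linarith

theorem apply_mul_mul_le (h : IsPseudoRankFunction N) (u x v : R) : N (u * x * v) ≤ N x :=
  (h.mul_le_left _ _).trans (h.mul_le_right _ _)

end IsPseudoRankFunction

theorem map_sum_of_orthogonalIdempotents {R : Type*} [Ring R] {M : Type*} [AddCommMonoid M]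
    {N : R → M} (h0 : N 0 = 0)
    (hadd : ∀ e f : R, IsIdempotentElem e → IsIdempotentElem f → e * f = 0 → f * e = 0 →
      N (e + f) = N e + N f)
    {I : Type*} {e : I → R} (he : OrthogonalIdempotents e) (s : Finset I) :
    N (∑ i ∈ s, e i) = ∑ i ∈ s, N (e i) := by
  classical
  induction s using Finset.induction_on with
  | empty => simpa using h0
  | insert a s ha ih =>
    have hsa : (∑ i ∈ s, e i) * e a = 0 := Finset.sum_mul s e (e a) ▸
      Finset.sum_eq_zero fun i hi => he.ortho (ne_of_mem_of_not_mem hi ha)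
    rw [Finset.sum_insert ha, Finset.sum_insert ha, hadd _ _ (he.idem a) he.isIdempotentElem_sum
      (he.mul_sum_of_notMem ha) hsa, ih]

section LinearAlgebra

variable {E : Type*} [DivisionRing E]

open Module LinearMap

theorem exists_eq_comp_comp_of_finrank_range_eq {V W V' W' : Type*}
    [AddCommGroup V] [Module E V] [AddCommGroup W] [Module E W] [FiniteDimensional E W]
    [AddCommGroup V'] [Module E V'] [AddCommGroup W'] [Module E W'] [FiniteDimensional E W']
    {f : V →ₗ[E] W} {g : V' →ₗ[E] W'} (h : finrank E (range f) = finrank E (range g)) :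
    ∃ (a : W' →ₗ[E] W) (b : V →ₗ[E] V'), f = a ∘ₗ g ∘ₗ b := by
  let e : range f ≃ₗ[E] range g := LinearEquiv.ofFinrankEq _ _ h
  obtain ⟨b, hb⟩ := Module.projective_lifting_property g.rangeRestrict
    (e.toLinearMap ∘ₗ f.rangeRestrict) g.surjective_rangeRestrict
  obtain ⟨π, hπ⟩ := (range g).subtype.exists_leftInverse_of_injective (range g).ker_subtype
  refine ⟨(range f).subtype ∘ₗ e.symm.toLinearMap ∘ₗ π, b, LinearMap.ext fun v => ?_⟩
  have hgb : g (b v) = (e (f.rangeRestrict v) : W') :=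
    congrArg Subtype.val (LinearMap.congr_fun hb v)
  have hπ' : ∀ w : range g, π w = w := LinearMap.congr_fun hπ
  simp [hgb, hπ']

theorem finrank_range_add_of_orthogonal {V : Type*} [AddCommGroup V] [Module E V]
    [FiniteDimensional E V] {p q : Module.End E V} (hp : IsIdempotentElem p)
    (hq : IsIdempotentElem q) (hpq : p * q = 0) (hqp : q * p = 0) :
    finrank E (range (p + q)) = finrank E (range p) + finrank E (range q) := by
  have hsup : range (p + q) = range p ⊔ range q := by
    refine le_antisymm (range_add_le p q) (sup_le ?_ ?_)
    · calc range p = range ((p + q) * p) := by rw [add_mul, hp.eq, hqp, add_zero]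
        _ ≤ _ := range_comp_le_range _ _
    · calc range q = range ((p + q) * q) := by rw [add_mul, hq.eq, hpq, zero_add]
        _ ≤ _ := range_comp_le_range _ _
  have hinf : range p ⊓ range q = ⊥ := by
    refine eq_bot_iff.2 fun x hx => ?_
    have hxp : p x = x := (IsIdempotentElem.mem_range_iff hp).1 (Submodule.mem_inf.1 hx).1
    have hxq : q x = x := (IsIdempotentElem.mem_range_iff hq).1 (Submodule.mem_inf.1 hx).2
    rw [Submodule.mem_bot, ← hxp, ← hxq, ← Module.End.mul_apply, hpq, LinearMap.zero_apply]
  have := Submodule.finrank_sup_add_finrank_inf_eq (range p) (range q)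
  rwa [hinf, finrank_bot, add_zero, ← hsup] at this

end LinearAlgebra

section RowRank

variable {E : Type*} [DivisionRing E] {n : Type*} [Fintype n] [DecidableEq n]

open Module LinearMap Matrix

/-- `Matrix.rank` needs a commutative ring; over a division ring we use the dimension of the row
space, the range of `v ↦ v ᵥ* x`. -/
def rowRank (x : Matrix n n E) : ℕ :=
  finrank E (range (toLinearMapRight' x))

theorem rowRank_mul_le_left (x y : Matrix n n E) : rowRank (x * y) ≤ rowRank x := by
  rw [rowRank, rowRank, toLinearMapRight'_mul, range_comp]
  exact Submodule.finrank_map_le _ _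

theorem rowRank_mul_le_right (x y : Matrix n n E) : rowRank (x * y) ≤ rowRank y := by
  rw [rowRank, rowRank, toLinearMapRight'_mul]
  exact Submodule.finrank_mono (range_comp_le_range _ _)

theorem rowRank_add_le (x y : Matrix n n E) : rowRank (x + y) ≤ rowRank x + rowRank y := by
  rw [rowRank, rowRank, rowRank, map_add]
  exact (Submodule.finrank_mono (range_add_le _ _)).trans
    (Submodule.finrank_add_le_finrank_add_finrank _ _)

theorem rowRank_le_card (x : Matrix n n E) : rowRank x ≤ Fintype.card n :=
  (Submodule.finrank_le _).trans_eq (finrank_fintype_fun_eq_card E)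

@[simp]
theorem rowRank_one : rowRank (1 : Matrix n n E) = Fintype.card n := by
  rw [rowRank, toLinearMapRight'_one, range_id, finrank_top, finrank_fintype_fun_eq_card]

@[simp]
theorem rowRank_zero : rowRank (0 : Matrix n n E) = 0 := by
  rw [rowRank, map_zero, range_zero, finrank_bot]

@[simp]
theorem rowRank_single_one (a : n) : rowRank (Matrix.single a a (1 : E)) = 1 := by
  have : range (toLinearMapRight' (Matrix.single a a (1 : E))) = E ∙ Pi.single a 1 := by
    have hv : ∀ v : n → E, v ᵥ* Matrix.single a a 1 = v a • Pi.single a 1 := fun v => by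
      ext j; by_cases h : a = j <;> simp [vecMul, dotProduct, Matrix.single, eq_comm, h]
    refine le_antisymm ?_
      ((Submodule.span_singleton_le_iff_mem _ _).2 ⟨Pi.single a 1, by simp [hv]⟩)
    rintro _ ⟨v, rfl⟩
    exact Submodule.mem_span_singleton.2 ⟨v a, (hv v).symm⟩
  rw [rowRank, this, finrank_span_singleton (by simp)]

theorem rowRank_add_of_orthogonal {e f : Matrix n n E} (he : IsIdempotentElem e)
    (hf : IsIdempotentElem f) (hef : e * f = 0) (hfe : f * e = 0) :
    rowRank (e + f) = rowRank e + rowRank f := by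
  have hidem : ∀ {x : Matrix n n E}, IsIdempotentElem x →
      IsIdempotentElem (toLinearMapRight' x : Module.End E (n → E)) := fun {x} hx => by
    rw [IsIdempotentElem, Module.End.mul_eq_comp, ← toLinearMapRight'_mul, hx.eq]
  have horth : ∀ {x y : Matrix n n E}, x * y = 0 →
      (toLinearMapRight' y : Module.End E (n → E)) * toLinearMapRight' x = 0 := fun {x y} h => by
    rw [Module.End.mul_eq_comp, ← toLinearMapRight'_mul, h, map_zero]
  rw [rowRank, map_add]
  exact finrank_range_add_of_orthogonal (hidem he) (hidem hf) (horth hfe) (horth hef)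

theorem exists_eq_mul_mul_of_rowRank_eq {x y : Matrix n n E} (h : rowRank x = rowRank y) :
    ∃ u v : Matrix n n E, x = u * y * v := by
  obtain ⟨a, b, hab⟩ := exists_eq_comp_comp_of_finrank_range_eq h
  refine ⟨LinearMap.toMatrixRight' b, LinearMap.toMatrixRight' a, toLinearMapRight'.injective ?_⟩
  simp [hab]

theorem orthogonalIdempotents_single_one :
    OrthogonalIdempotents fun a : n => Matrix.single a a (1 : E) :=
  OrthogonalIdempotents.iff_mul_eq.2 fun a b => by
    by_cases h : a = b
    · subst h; simp
    · simp [h]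

theorem rowRank_sum_single_one (s : Finset n) :
    rowRank (∑ a ∈ s, Matrix.single a a (1 : E)) = s.card := by
  have := map_sum_of_orthogonalIdempotents (R := Matrix n n E) (N := rowRank) rowRank_zero
    (fun _ _ => rowRank_add_of_orthogonal) orthogonalIdempotents_single_one s
  simpa using this

end RowRank

section MatrixProduct

variable {E : Type*} [DivisionRing E] {ι : Type*} {m : ι → Type*} [∀ i, Fintype (m i)]
  [∀ i, DecidableEq (m i)]

open Matrix

theorem isPseudoRankFunction_sum_rowRank_mul [Fintype ι] {w : ι → ℝ} (hw : ∀ i, 0 ≤ w i)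
    (hsum : ∑ i, (Fintype.card (m i) : ℝ) * w i = 1) :
    IsPseudoRankFunction fun M : Π i, Matrix (m i) (m i) E => ∑ i, (rowRank (M i) : ℝ) * w i where
  nonneg _ := Finset.sum_nonneg fun i _ => mul_nonneg (Nat.cast_nonneg _) (hw i)
  le_one M := hsum ▸ Finset.sum_le_sum fun i _ =>
    mul_le_mul_of_nonneg_right (by exact_mod_cast rowRank_le_card (M i)) (hw i)
  map_one := by simpa using hsum
  subadditive M M' := by
    rw [← Finset.sum_add_distrib]
    refine Finset.sum_le_sum fun i _ => ?_
    rw [← add_mul]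
    exact mul_le_mul_of_nonneg_right (by exact_mod_cast rowRank_add_le (M i) (M' i)) (hw i)
  mul_le_left M M' := Finset.sum_le_sum fun i _ =>
    mul_le_mul_of_nonneg_right (by exact_mod_cast rowRank_mul_le_left (M i) (M' i)) (hw i)
  mul_le_right M M' := Finset.sum_le_sum fun i _ =>
    mul_le_mul_of_nonneg_right (by exact_mod_cast rowRank_mul_le_right (M i) (M' i)) (hw i)
  add_of_orthogonal e f he hf hef hfe := by
    rw [← Finset.sum_add_distrib]
    refine Finset.sum_congr rfl fun i _ => ?_
    rw [Pi.add_apply, rowRank_add_of_orthogonal (congrFun he i) (congrFun hf i) (congrFun hef i)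
      (congrFun hfe i)]
    push_cast
    ring

variable [DecidableEq ι]

variable (E) in
/-- The diagonal matrix unit `e_{aa}` in the factor `i` of `Π i, M_{m i}(E)`, for `x = ⟨i, a⟩`. -/
def diagUnit (x : Σ i, m i) : Π i, Matrix (m i) (m i) E :=
  Pi.single x.1 (single x.2 x.2 1)

theorem orthogonalIdempotents_diagUnit : OrthogonalIdempotents (diagUnit E (m := m)) := by
  refine OrthogonalIdempotents.iff_mul_eq.2 fun ⟨i, a⟩ ⟨j, b⟩ => ?_
  by_cases hij : i = j
  · subst hij
    rw [diagUnit, diagUnit, ← Pi.single_mul, orthogonalIdempotents_single_one.mul_eq]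
    by_cases hab : a = b <;> simp [hab]
  · rw [if_neg (fun h => hij (congrArg Sigma.fst h))]
    ext k : 1
    by_cases hk : k = i
    · subst hk; simp [diagUnit, Ne.symm hij]
    · simp [diagUnit, hk]

theorem IsPseudoRankFunction.apply_diagUnit_eq {P : (Π i, Matrix (m i) (m i) E) → ℝ}
    (hP : IsPseudoRankFunction P) (i : ι) (a b : m i) :
    P (diagUnit E ⟨i, a⟩) = P (diagUnit E ⟨i, b⟩) := by
  have key : ∀ a b : m i, P (diagUnit E ⟨i, a⟩) ≤ P (diagUnit E ⟨i, b⟩) := fun a b => by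
    let x : Π i, Matrix (m i) (m i) E := Pi.single i (single a b 1)
    let y : Π i, Matrix (m i) (m i) E := Pi.single i (single b a 1)
    calc P (diagUnit E ⟨i, a⟩) = P (x * diagUnit E ⟨i, b⟩ * y) := by
          simp [x, y, diagUnit, ← Pi.single_mul]
      _ ≤ P (diagUnit E ⟨i, b⟩) := hP.apply_mul_mul_le _ _ _
  exact le_antisymm (key a b) (key b a)

variable [Fintype ι]

theorem IsPseudoRankFunction.apply_eq_sum_rowRank_mul {P : (Π i, Matrix (m i) (m i) E) → ℝ}
    (hP : IsPseudoRankFunction P) (o : ∀ i, m i) (M : Π i, Matrix (m i) (m i) E) :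
    P M = ∑ i, (rowRank (M i) : ℝ) * P (diagUnit E ⟨i, o i⟩) := by
  have hs : ∀ i, ∃ s : Finset (m i), s.card = rowRank (M i) := fun i =>
    let ⟨s, _, hs⟩ := Finset.exists_subset_card_eq (s := Finset.univ)
      ((rowRank_le_card (M i)).trans_eq Finset.card_univ.symm)
    ⟨s, hs⟩
  choose s hs using hs
  -- a 0/1 diagonal with the same blockwise rank as `M`
  set Dg : Π i, Matrix (m i) (m i) E := ∑ x ∈ Finset.univ.sigma s, diagUnit E x with hDg
  have hDg_apply : ∀ i, Dg i = ∑ a ∈ s i, single a a 1 := fun i => by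
    rw [hDg, Finset.sum_apply, Finset.sum_sigma, Finset.sum_eq_single i (fun j _ hj => by
      simp [diagUnit, Ne.symm hj]) (by simp)]
    simp [diagUnit]
  have hrank : ∀ i, rowRank (M i) = rowRank (Dg i) := fun i => by
    rw [hDg_apply, rowRank_sum_single_one, hs]
  choose u v huv using fun i => exists_eq_mul_mul_of_rowRank_eq (hrank i)
  choose u' v' huv' using fun i => exists_eq_mul_mul_of_rowRank_eq (hrank i).symm
  have hPM : P M = P Dg := by
    refine le_antisymm ?_ ?_
    · calc P M = P (u * Dg * v) := congrArg P (funext huv)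
        _ ≤ P Dg := hP.apply_mul_mul_le _ _ _
    · calc P Dg = P (u' * M * v') := congrArg P (funext huv')
        _ ≤ P M := hP.apply_mul_mul_le _ _ _
  rw [hPM, hDg, map_sum_of_orthogonalIdempotents hP.map_zero hP.add_of_orthogonal
    orthogonalIdempotents_diagUnit, Finset.sum_sigma]
  refine Finset.sum_congr rfl fun i _ => ?_
  rw [Finset.sum_congr rfl fun a _ => hP.apply_diagUnit_eq i a (o i), Finset.sum_const, hs,
    nsmul_eq_mul]

theorem IsPseudoRankFunction.ext_diagUnit {P₁ P₂ : (Π i, Matrix (m i) (m i) E) → ℝ}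
    (h₁ : IsPseudoRankFunction P₁) (h₂ : IsPseudoRankFunction P₂) (o : ∀ i, m i)
    (h : ∀ i, P₁ (diagUnit E ⟨i, o i⟩) = P₂ (diagUnit E ⟨i, o i⟩)) : P₁ = P₂ :=
  funext fun M => by
    rw [h₁.apply_eq_sum_rowRank_mul o, h₂.apply_eq_sum_rowRank_mul o]
    simp only [h]

theorem sum_rowRank_diagUnit_mul (w : ι → ℝ) (x : Σ i, m i) :
    ∑ j, (rowRank (diagUnit E x j) : ℝ) * w j = w x.1 := by
  rw [Finset.sum_eq_single x.1 (fun j _ hj => by simp [diagUnit, hj]) (by simp)]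
  simp [diagUnit]

end MatrixProduct

theorem IsPseudoRankFunction.of_directed {R : Type*} [Ring R] {S : Type*} [SetLike S R]
    [SubringClass S R] [LE S] [IsConcreteLE S R] {ι : Type*} {T : ι → S}
    (hT : Directed (· ≤ ·) T) (hcover : ∀ x, ∃ i, x ∈ T i) {N : R → ℝ}
    (hN : ∀ i, IsPseudoRankFunction fun x : T i => N x) : IsPseudoRankFunction N := by
  have hpair : ∀ a b : R, ∃ i, a ∈ T i ∧ b ∈ T i := fun a b => by
    obtain ⟨i, ha⟩ := hcover a
    obtain ⟨j, hb⟩ := hcover b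
    obtain ⟨k, hik, hjk⟩ := hT i j
    exact ⟨k, mem_of_le_of_mem hik ha, mem_of_le_of_mem hjk hb⟩
  refine ⟨fun x => ?_, fun x => ?_, ?_, fun a b => ?_, fun a b => ?_, fun a b => ?_,
    fun e f he hf hef hfe => ?_⟩
  · obtain ⟨i, hx⟩ := hcover x
    exact (hN i).nonneg ⟨x, hx⟩
  · obtain ⟨i, hx⟩ := hcover x
    exact (hN i).le_one ⟨x, hx⟩
  · obtain ⟨i, -⟩ := hcover 1
    exact (hN i).map_one
  · obtain ⟨i, ha, hb⟩ := hpair a b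
    exact (hN i).subadditive ⟨a, ha⟩ ⟨b, hb⟩
  · obtain ⟨i, ha, hb⟩ := hpair a b
    exact (hN i).mul_le_left ⟨a, ha⟩ ⟨b, hb⟩
  · obtain ⟨i, ha, hb⟩ := hpair a b
    exact (hN i).mul_le_right ⟨a, ha⟩ ⟨b, hb⟩
  · obtain ⟨i, he', hf'⟩ := hpair e f
    exact (hN i).add_of_orthogonal ⟨e, he'⟩ ⟨f, hf'⟩ (Subtype.ext he) (Subtype.ext hf)
      (Subtype.ext hef) (Subtype.ext hfe)

section Topology

variable (R : Type*) [Ring R]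

theorem isClosed_setOf_isPseudoRankFunction :
    IsClosed {S : R → ℝ | IsPseudoRankFunction S} := by
  have h : {S : R → ℝ | IsPseudoRankFunction S} = {S | (∀ x, 0 ≤ S x) ∧ (∀ x, S x ≤ 1) ∧
      S 1 = 1 ∧ (∀ a b, S (a + b) ≤ S a + S b) ∧ (∀ a b, S (a * b) ≤ S a) ∧
      (∀ a b, S (a * b) ≤ S b) ∧ ∀ e f : R, IsIdempotentElem e → IsIdempotentElem f →
        e * f = 0 → f * e = 0 → S (e + f) = S e + S f} := by
    ext S
    exact ⟨fun ⟨h₁, h₂, h₃, h₄, h₅, h₆, h₇⟩ => ⟨h₁, h₂, h₃, h₄, h₅, h₆, h₇⟩,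
      fun ⟨h₁, h₂, h₃, h₄, h₅, h₆, h₇⟩ => ⟨h₁, h₂, h₃, h₄, h₅, h₆, h₇⟩⟩
  simp only [h, Set.ofPred_and, Set.ofPred_forall]
  refine .inter ?_ (.inter ?_ (.inter ?_ (.inter ?_ (.inter ?_ (.inter ?_ ?_)))))
  · exact isClosed_iInter fun x => isClosed_le continuous_const (continuous_apply x)
  · exact isClosed_iInter fun x => isClosed_le (continuous_apply x) continuous_const
  · exact isClosed_eq (continuous_apply 1) continuous_const
  · exact isClosed_iInter fun a => isClosed_iInter fun b =>
      isClosed_le (continuous_apply _) ((continuous_apply a).add (continuous_apply b))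
  · exact isClosed_iInter fun a => isClosed_iInter fun b =>
      isClosed_le (continuous_apply _) (continuous_apply a)
  · exact isClosed_iInter fun a => isClosed_iInter fun b =>
      isClosed_le (continuous_apply _) (continuous_apply b)
  · exact isClosed_iInter fun e => isClosed_iInter fun f => isClosed_iInter fun _ =>
      isClosed_iInter fun _ => isClosed_iInter fun _ => isClosed_iInter fun _ =>
        isClosed_eq (continuous_apply _) ((continuous_apply e).add (continuous_apply f))

instance : CompactSpace {S : R → ℝ // IsPseudoRankFunction S} :=
  isCompact_iff_compactSpace.mp <| (isCompact_univ_pi fun _ => isCompact_Icc).of_isClosed_subset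
    (isClosed_setOf_isPseudoRankFunction R) fun _ hS _ _ => ⟨hS.nonneg _, hS.le_one _⟩

variable {R} {R' : Type*} [Ring R']

def comapPseudoRank (f : R' →+* R) :
    {S : R → ℝ // IsPseudoRankFunction S} → {S : R' → ℝ // IsPseudoRankFunction S} :=
  fun S => ⟨S.1 ∘ f, S.2.comp f⟩

theorem continuous_comapPseudoRank (f : R' →+* R) : Continuous (comapPseudoRank f) := by
  unfold comapPseudoRank
  refine .subtype_mk (continuous_pi fun x => ?_) _
  exact (continuous_apply (f x)).comp continuous_subtype_val

end Topology

section TensorProduct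

variable {K : Type*} [Field K] (D : Type*) [DivisionRing D] [Algebra K D]
  {B : Type*} [Ring B] [Algebra K B]

/-- `D ⊗[K] C`, seen inside `D ⊗[K] B`. -/
def tensorSubalgebra (C : Subalgebra K B) : Subalgebra K (D ⊗[K] B) :=
  (Algebra.TensorProduct.map (AlgHom.id K D) C.val).range

theorem map_id_val_injective (C : Subalgebra K B) :
    Function.Injective (Algebra.TensorProduct.map (AlgHom.id K D) C.val) :=
  Module.Flat.lTensor_preserves_injective_linearMap (M := D) C.val.toLinearMap
    Subtype.val_injective

def oneTmul (C : Subalgebra K B) : C →ₐ[K] tensorSubalgebra D C :=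
  (Algebra.TensorProduct.map (AlgHom.id K D) C.val).rangeRestrict.comp
    Algebra.TensorProduct.includeRight

variable {D}

theorem tmul_mem_tensorSubalgebra {C : Subalgebra K B} (d : D) {b : B} (hb : b ∈ C) :
    d ⊗ₜ[K] b ∈ tensorSubalgebra D C :=
  ⟨d ⊗ₜ ⟨b, hb⟩, rfl⟩

theorem tensorSubalgebra_mono : Monotone (tensorSubalgebra (K := K) D (B := B)) := by
  rintro C C' h _ ⟨x, rfl⟩
  induction x using TensorProduct.induction_on with
  | zero => simp
  | tmul d c => exact tmul_mem_tensorSubalgebra d (h c.2)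
  | add x y hx hy => simpa using add_mem hx hy

theorem exists_mem_tensorSubalgebra {C : ℕ → Subalgebra K B} (hC : Monotone C)
    (hcover : ∀ b, ∃ n, b ∈ C n) (x : D ⊗[K] B) : ∃ n, x ∈ tensorSubalgebra D (C n) := by
  induction x using TensorProduct.induction_on with
  | zero => exact ⟨0, zero_mem _⟩
  | tmul d b =>
    obtain ⟨n, hn⟩ := hcover b
    exact ⟨n, tmul_mem_tensorSubalgebra d hn⟩
  | add x y hx hy =>
    obtain ⟨n₁, h₁⟩ := hx
    obtain ⟨n₂, h₂⟩ := hy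
    exact ⟨max n₁ n₂, add_mem (tensorSubalgebra_mono (hC (le_max_left _ _)) h₁)
      (tensorSubalgebra_mono (hC (le_max_right _ _)) h₂)⟩

variable (D) {ι : Type*} [Fintype ι] [DecidableEq ι] {m : ι → Type*} [∀ i, Fintype (m i)]
  [∀ i, DecidableEq (m i)] {C : Subalgebra K B}

/-- `Π i, M_{m i}(D) ≃ D ⊗[K] Π i, M_{m i}(K) ≃ D ⊗[K] C`, for a matricial `C`. -/
def matrixEquivTensorSubalgebra (φ : C ≃ₐ[K] Π i, Matrix (m i) (m i) K) :
    (Π i, Matrix (m i) (m i) D) ≃ₐ[K] tensorSubalgebra D C :=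
  (AlgEquiv.piCongrRight fun i => matrixEquivTensor (m i) K D).trans <|
    (Algebra.TensorProduct.piRight K K D fun i => Matrix (m i) (m i) K).symm.trans <|
      (Algebra.TensorProduct.congr AlgEquiv.refl φ.symm).trans <|
        AlgEquiv.ofInjective _ (map_id_val_injective D C)

variable {D}

theorem matrixEquivTensorSubalgebra_map_algebraMap (φ : C ≃ₐ[K] Π i, Matrix (m i) (m i) K)
    (κ : Π i, Matrix (m i) (m i) K) :
    matrixEquivTensorSubalgebra D φ (fun i => (κ i).map (algebraMap K D)) =
      oneTmul D C (φ.symm κ) := by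
  have hmat : ∀ i, matrixEquivTensor (m i) K D ((κ i).map (algebraMap K D)) = 1 ⊗ₜ κ i :=
    fun i => ((AlgEquiv.symm_apply_eq _).1 (by rw [matrixEquivTensor_apply_symm, one_smul])).symm
  have hpi : (Algebra.TensorProduct.piRight K K D fun i => Matrix (m i) (m i) K).symm
      (fun i => 1 ⊗ₜ κ i) = 1 ⊗ₜ κ := by
    rw [AlgEquiv.symm_apply_eq, Algebra.TensorProduct.piRight_tmul]
  have hpc : AlgEquiv.piCongrRight (fun i => matrixEquivTensor (m i) K D)
      (fun i => (κ i).map (algebraMap K D)) = fun i => 1 ⊗ₜ κ i := funext hmat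
  ext1
  simp only [matrixEquivTensorSubalgebra, AlgEquiv.trans_apply, hpc, hpi]
  rfl

theorem matrixEquivTensorSubalgebra_diagUnit (φ : C ≃ₐ[K] Π i, Matrix (m i) (m i) K)
    (x : Σ i, m i) :
    matrixEquivTensorSubalgebra D φ (diagUnit D x) = oneTmul D C (φ.symm (diagUnit K x)) := by
  rw [← matrixEquivTensorSubalgebra_map_algebraMap]
  congr 1
  funext i
  by_cases hi : i = x.1
  · subst hi; simp [diagUnit]
  · simp [diagUnit, hi]

end TensorProduct

section Extension

variable {K : Type*} [Field K] {D : Type*} [DivisionRing D] [Algebra K D]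
  {B : Type*} [Ring B] [Algebra K B]

theorem IsMatricialAlgebra.eq_of_forall_oneTmul_eq {C : Subalgebra K B}
    (hC : IsMatricialAlgebra K C) {S₁ S₂ : tensorSubalgebra D C → ℝ}
    (h₁ : IsPseudoRankFunction S₁) (h₂ : IsPseudoRankFunction S₂)
    (h : ∀ c, S₁ (oneTmul D C c) = S₂ (oneTmul D C c)) : S₁ = S₂ := by
  obtain ⟨k, p, hp, ⟨φ⟩⟩ := hC
  let e := matrixEquivTensorSubalgebra D φ
  have he : S₁ ∘ e = S₂ ∘ e := (h₁.comp e).ext_diagUnit (h₂.comp e) (fun i => ⟨0, hp i⟩)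
    fun i => by simp [e, matrixEquivTensorSubalgebra_diagUnit, h]
  funext x
  obtain ⟨M, rfl⟩ := e.surjective x
  exact congrFun he M

theorem IsMatricialAlgebra.exists_forall_oneTmul_eq {C : Subalgebra K B}
    (hC : IsMatricialAlgebra K C) {N : B → ℝ} (hN : IsPseudoRankFunction N) :
    ∃ P : tensorSubalgebra D C → ℝ, IsPseudoRankFunction P ∧ ∀ c, P (oneTmul D C c) = N c := by
  obtain ⟨k, p, hp, ⟨φ⟩⟩ := hC
  let o : ∀ i, Fin (p i) := fun i => ⟨0, hp i⟩
  let w : Fin (k + 1) → ℝ := fun i => N (φ.symm (diagUnit K ⟨i, o i⟩))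
  have hNφ := hN.comp (C.val.comp φ.symm.toAlgHom)
  have hw : ∑ i, (Fintype.card (Fin (p i)) : ℝ) * w i = 1 := by
    simpa [hN.map_one] using (hNφ.apply_eq_sum_rowRank_mul o 1).symm
  let e := matrixEquivTensorSubalgebra D φ
  have hP := (isPseudoRankFunction_sum_rowRank_mul (E := D) (fun i => hN.nonneg _) hw).comp
    e.symm
  refine ⟨_, hP, fun c => ?_⟩
  have := (hP.comp ((oneTmul D C).comp φ.symm.toAlgHom)).ext_diagUnit hNφ o fun i => by
    simp [← matrixEquivTensorSubalgebra_diagUnit, e, sum_rowRank_diagUnit_mul]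
  simpa using congrFun this (φ c)

theorem IsUltramatricialAlgebra.eq_of_forall_one_tmul_eq (hB : IsUltramatricialAlgebra K B)
    {S₁ S₂ : D ⊗[K] B → ℝ} (h₁ : IsPseudoRankFunction S₁) (h₂ : IsPseudoRankFunction S₂)
    (h : ∀ b, S₁ (1 ⊗ₜ b) = S₂ (1 ⊗ₜ b)) : S₁ = S₂ := by
  obtain ⟨C, hstep, hmat, hcover⟩ := hB
  funext x
  obtain ⟨n, hx⟩ := exists_mem_tensorSubalgebra (monotone_nat_of_le_succ hstep) hcover x
  have := (hmat n).eq_of_forall_oneTmul_eq (h₁.comp (tensorSubalgebra D (C n)).val)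
    (h₂.comp (tensorSubalgebra D (C n)).val) fun c => h c
  exact congrFun this ⟨x, hx⟩

theorem IsUltramatricialAlgebra.exists_forall_one_tmul_eq (hB : IsUltramatricialAlgebra K B)
    {N : B → ℝ} (hN : IsPseudoRankFunction N) :
    ∃ S : D ⊗[K] B → ℝ, IsPseudoRankFunction S ∧ ∀ b, S (1 ⊗ₜ b) = N b := by
  obtain ⟨C, hstep, hmat, hcover⟩ := hB
  have hC : Monotone C := monotone_nat_of_le_succ hstep
  have hT : Monotone fun n => tensorSubalgebra D (C n) := tensorSubalgebra_mono.comp hC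
  choose P hP hPN using fun n => (hmat n).exists_forall_oneTmul_eq (D := D) hN
  have hcompat : ∀ m n (hmn : m ≤ n) x, P n (Subalgebra.inclusion (hT hmn) x) = P m x :=
    fun m n hmn => congrFun <| (hmat m).eq_of_forall_oneTmul_eq
      ((hP n).comp (Subalgebra.inclusion (hT hmn))) (hP m) fun c =>
        (hPN n ⟨c, hC hmn c.2⟩).trans (hPN m c).symm
  let S := Set.liftCover (fun n => (tensorSubalgebra D (C n) : Set (D ⊗[K] B))) P
    (fun m n x hm hn => by
      rcases le_total m n with hmn | hnm
      · exact (hcompat m n hmn ⟨x, hm⟩).symm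
      · exact hcompat n m hnm ⟨x, hn⟩)
    (Set.iUnion_eq_univ_iff.2 (exists_mem_tensorSubalgebra hC hcover))
  have hS : ∀ n (x : tensorSubalgebra D (C n)), S x = P n x :=
    fun n x => Set.liftCover_coe (f := P) (i := n) x
  refine ⟨S, IsPseudoRankFunction.of_directed hT.directed_le
    (exists_mem_tensorSubalgebra hC hcover) fun n => ?_, fun b => ?_⟩
  · simpa only [hS] using hP n
  · obtain ⟨n, hb⟩ := hcover b
    exact (hS n (oneTmul D (C n) ⟨b, hb⟩)).trans (hPN n _)

theorem IsUltramatricialAlgebra.bijective_comapPseudoRank_includeRight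
    (hB : IsUltramatricialAlgebra K B) :
    Function.Bijective
      (comapPseudoRank (Algebra.TensorProduct.includeRight : B →ₐ[K] D ⊗[K] B).toRingHom) := by
  refine ⟨fun S₁ S₂ h => Subtype.ext (hB.eq_of_forall_one_tmul_eq S₁.2 S₂.2 fun b =>
    congrFun (congrArg Subtype.val h) b), fun N => ?_⟩
  obtain ⟨S, hS, hSN⟩ := hB.exists_forall_one_tmul_eq (D := D) N.2
  exact ⟨⟨S, hS⟩, Subtype.ext (funext hSN)⟩

end Extension

theorem statement17_general (D : Type) [DivisionRing D] (K : Type) [Field K] [Algebra K D]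
    (B : Type) [Ring B] [Algebra K B] (hB : IsUltramatricialAlgebra K B) :
    ∃ h : {S : D ⊗[K] B → ℝ // IsPseudoRankFunction S} ≃ₜ
        {S : B → ℝ // IsPseudoRankFunction S},
      (∀ S : {S : D ⊗[K] B → ℝ // IsPseudoRankFunction S},
        ((h S : B → ℝ)) = fun b => (S : D ⊗[K] B → ℝ) ((1 : D) ⊗ₜ[K] b)) ∧
      ∀ (S₁ S₂ S₃ : {S : D ⊗[K] B → ℝ // IsPseudoRankFunction S}) (t : ℝ),
        0 ≤ t → t ≤ 1 →
        ((S₃ : D ⊗[K] B → ℝ)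
          = fun a => t * (S₁ : D ⊗[K] B → ℝ) a + (1 - t) * (S₂ : D ⊗[K] B → ℝ) a) →
        ((h S₃ : B → ℝ)
          = fun b => t * (h S₁ : B → ℝ) b + (1 - t) * (h S₂ : B → ℝ) b) := by
  refine ⟨(continuous_comapPseudoRank _).homeoOfEquivCompactToT2
    (f := Equiv.ofBijective _ hB.bijective_comapPseudoRank_includeRight), fun S => rfl, ?_⟩
  rintro S₁ S₂ S₃ t - - h
  exact funext fun b => congrFun h _

/-- The restriction map `S ↦ S|_{1 ⊗ B}` is an affine homeomorphism from the space of
pseudo-rank functions of `A = D ⊗_K B` (with the topology of pointwise convergence) onto the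
space of pseudo-rank functions of `B`, where `D` is a division ring with center `K` and `B` is
an ultramatricial `K`-algebra (as used in the proof of Theorem 3.2 of Ara–Claramunt). -/
theorem statement17 (D : Type) [DivisionRing D] (K : Type) [Field K] [Algebra K D]
    (hcenter : Set.range (algebraMap K D) = (Subring.center D : Set D))
    (B : Type) [Ring B] [Algebra K B] (hB : IsUltramatricialAlgebra K B) :
    ∃ h : {S : D ⊗[K] B → ℝ // IsPseudoRankFunction S} ≃ₜ
        {S : B → ℝ // IsPseudoRankFunction S},
      (∀ S : {S : D ⊗[K] B → ℝ // IsPseudoRankFunction S},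
        ((h S : B → ℝ)) = fun b => (S : D ⊗[K] B → ℝ) ((1 : D) ⊗ₜ[K] b)) ∧
      ∀ (S₁ S₂ S₃ : {S : D ⊗[K] B → ℝ // IsPseudoRankFunction S}) (t : ℝ),
        0 ≤ t → t ≤ 1 →
        ((S₃ : D ⊗[K] B → ℝ)
          = fun a => t * (S₁ : D ⊗[K] B → ℝ) a + (1 - t) * (S₂ : D ⊗[K] B → ℝ) a) →
        ((h S₃ : B → ℝ)
          = fun b => t * (h S₁ : B → ℝ) b + (1 - t) * (h S₂ : B → ℝ) b) :=
  statement17_general D K B hB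

end AraClaramunt
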